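/- arXiv:2605.14800 — 3 statements merged into one kernel-verified Lean document; each statement's English description precedes it below -/
import Mathlib

section
/- Let f : ℝ^d → ℝ be (H0,H1)-smooth with H0, H1 > 0 and f* := inf f > −∞, and run GD with warm-up step size: x^{k+1} = x^k − η_k ∇f(x^k), where η_k = θ·min{1/H0, 1/(3H1·F_k)}, F_k := f(x^k) − f*, and θ ∈ (0, 3/4]. Then for every k, F_{k+1} ≤ F_k − (η_k/2)‖∇f(x^k)‖². In particular, the sequence (F_k) is non-increasing. -/
/-!
Along the segment from `y` to `z`, the bound on `f'` gives the descent lemma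
`f z ≤ f y + ⟪f' y, z - y⟫ + L / 2 * ‖z - y‖ ^ 2` with `L = H0 + H1 F`, as long as
`‖z - y‖ ≤ 1 / √H1`. Stepping the distance `1 / √H1` against the gradient and using `f ≥ f*`
gives `‖f' y‖ ≤ √H1 max H0 (3 H1 F)`, so the warm-up step `η = θ / max H0 (3 H1 F)` moves by at
most `θ / √H1` and stays where the descent lemma holds. There `L η ≤ 4 θ / 3 ≤ 1`, and the descent
lemma yields `F_{k+1} ≤ F_k - η / 2 * ‖f' (x k)‖ ^ 2`.
-/

open scoped RealInnerProductSpace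

section Descent

variable {E : Type*} [NormedAddCommGroup E] [InnerProductSpace ℝ E] {f : E → ℝ}

theorem le_add_inner_add_sq_of_norm_gradient_sub_le [CompleteSpace E] {f' : E → E}
    (hgrad : ∀ w, HasGradientAt f (f' w) w) {L : ℝ} {y z : E}
    (hlip : ∀ w, ‖w - y‖ ≤ ‖z - y‖ → ‖f' w - f' y‖ ≤ L * ‖w - y‖) :
    f z ≤ f y + ⟪f' y, z - y⟫ + L / 2 * ‖z - y‖ ^ 2 := by
  set v := z - y
  set g : ℝ → ℝ := fun t => f (y + t • v) - t * ⟪f' y, v⟫ - L / 2 * t ^ 2 * ‖v‖ ^ 2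
  have hg : ∀ t : ℝ, HasDerivAt g (⟪f' (y + t • v) - f' y, v⟫ - L * t * ‖v‖ ^ 2) t := by
    intro t
    have hline : HasDerivAt (fun t : ℝ => y + t • v) v t := by
      simpa using ((hasDerivAt_id t).smul_const v).const_add y
    have hf : HasDerivAt (fun t : ℝ => f (y + t • v)) ⟪f' (y + t • v), v⟫ t := by
      simpa [Function.comp_def] using
        (hgrad (y + t • v)).hasFDerivAt.comp_hasDerivAt t hline
    refine ((hf.sub ((hasDerivAt_id t).mul_const ⟪f' y, v⟫)).sub
      (((hasDerivAt_pow 2 t).const_mul (L / 2)).mul_const (‖v‖ ^ 2))).congr_deriv ?_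
    rw [inner_sub_left]
    simp only [Nat.cast_ofNat]
    ring
  have hanti : AntitoneOn g (Set.Icc 0 1) := by
    refine antitoneOn_of_hasDerivWithinAt_nonpos (convex_Icc 0 1)
      (fun t _ => (hg t).continuousAt.continuousWithinAt)
      (fun t _ => (hg t).hasDerivWithinAt) ?_
    rw [interior_Icc]
    rintro t ⟨ht0, ht1⟩
    have hwy : ‖(y + t • v) - y‖ = t * ‖v‖ := by
      rw [add_sub_cancel_left, norm_smul, Real.norm_of_nonneg ht0.le]
    have hnear : ‖f' (y + t • v) - f' y‖ ≤ L * (t * ‖v‖) :=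
      hwy ▸ hlip _ (hwy ▸ mul_le_of_le_one_left (norm_nonneg v) ht1.le)
    have := real_inner_le_norm (f' (y + t • v) - f' y) v
    nlinarith [norm_nonneg v]
  have h01 := hanti (Set.left_mem_Icc.2 zero_le_one) (Set.right_mem_Icc.2 zero_le_one)
    zero_le_one
  simp only [g, v, zero_smul, add_zero, one_smul, add_sub_cancel] at h01
  linarith

theorem apply_sub_smul_le {y g : E} {L r : ℝ}
    (hq : ∀ z, ‖z - y‖ ≤ r → f z ≤ f y + ⟪g, z - y⟫ + L / 2 * ‖z - y‖ ^ 2)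
    {t : ℝ} (ht : 0 ≤ t) (htr : t * ‖g‖ ≤ r) :
    f (y - t • g) ≤ f y - t * ‖g‖ ^ 2 + L / 2 * t ^ 2 * ‖g‖ ^ 2 := by
  have hnorm : ‖(y - t • g) - y‖ = t * ‖g‖ := by
    rw [sub_sub_cancel_left, norm_neg, norm_smul, Real.norm_of_nonneg ht]
  have hinner : ⟪g, (y - t • g) - y⟫ = -(t * ‖g‖ ^ 2) := by
    rw [sub_sub_cancel_left, inner_neg_right, real_inner_smul_right,
      real_inner_self_eq_norm_sq]
  have := hq _ (hnorm ▸ htr)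
  rw [hnorm, hinner] at this
  linarith

theorem mul_norm_le_of_quadratic_bound {y g : E} {L r m : ℝ}
    (hq : ∀ z, ‖z - y‖ ≤ r → f z ≤ f y + ⟪g, z - y⟫ + L / 2 * ‖z - y‖ ^ 2)
    (hr : 0 ≤ r) (hL : 0 ≤ L) (hm : ∀ z, m ≤ f z) :
    r * ‖g‖ ≤ f y - m + L / 2 * r ^ 2 := by
  rcases eq_or_ne g 0 with rfl | hg
  · rw [norm_zero, mul_zero]
    linarith [hm y, mul_nonneg hL (sq_nonneg r)]
  have hg' : 0 < ‖g‖ := norm_pos_iff.2 hg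
  have hstep := apply_sub_smul_le hq (div_nonneg hr hg'.le) (div_mul_cancel₀ r hg'.ne').le
  have h1 : r / ‖g‖ * ‖g‖ ^ 2 = r * ‖g‖ := by field_simp
  have h2 : L / 2 * (r / ‖g‖) ^ 2 * ‖g‖ ^ 2 = L / 2 * r ^ 2 := by field_simp
  rw [h1, h2] at hstep
  linarith [hm (y - (r / ‖g‖) • g)]

end Descent

section WarmUp

variable {E : Type*} [NormedAddCommGroup E] [InnerProductSpace ℝ E] [CompleteSpace E]
  {f : E → ℝ} {f' : E → E} {H0 H1 m : ℝ}

theorem le_add_inner_add_sq_of_h0h1Smooth (hH1 : 0 < H1)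
    (hgrad : ∀ w, HasGradientAt f (f' w) w)
    (hsmooth : ∀ y z, √H1 * ‖z - y‖ ≤ 1 → ‖f' z - f' y‖ ≤ (H0 + H1 * (f y - m)) * ‖z - y‖)
    (y z : E) (hz : ‖z - y‖ ≤ (√H1)⁻¹) :
    f z ≤ f y + ⟪f' y, z - y⟫ + (H0 + H1 * (f y - m)) / 2 * ‖z - y‖ ^ 2 := by
  refine le_add_inner_add_sq_of_norm_gradient_sub_le hgrad fun w hw => hsmooth y w ?_
  calc √H1 * ‖w - y‖ ≤ √H1 * (√H1)⁻¹ := by gcongr; exact hw.trans hz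
    _ = 1 := mul_inv_cancel₀ (Real.sqrt_pos.2 hH1).ne'

theorem apply_sub_warmUpStep_le {θ : ℝ} (hH0 : 0 < H0) (hH1 : 0 < H1)
    (hθ0 : 0 ≤ θ) (hθ1 : θ ≤ 3 / 4)
    (hgrad : ∀ w, HasGradientAt f (f' w) w) (hm : ∀ w, m ≤ f w)
    (hsmooth : ∀ y z, √H1 * ‖z - y‖ ≤ 1 → ‖f' z - f' y‖ ≤ (H0 + H1 * (f y - m)) * ‖z - y‖)
    (y : E) :
    f (y - (θ / max H0 (3 * H1 * (f y - m))) • f' y) ≤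
      f y - θ / max H0 (3 * H1 * (f y - m)) / 2 * ‖f' y‖ ^ 2 := by
  set F := f y - m
  set M := max H0 (3 * H1 * F)
  set L := H0 + H1 * F
  set η := θ / M
  set r := (√H1)⁻¹
  have hF : 0 ≤ F := sub_nonneg.2 (hm y)
  have hM0 : 0 < M := lt_max_of_lt_left hH0
  have hH0M : H0 ≤ M := le_max_left _ _
  have hFM : 3 * H1 * F ≤ M := le_max_right _ _
  have hL : 0 ≤ L := by positivity
  have hη : 0 ≤ η := by positivity
  have hr : 0 < r := by positivity
  have hH1r : H1 * r ^ 2 = 1 := by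
    rw [inv_pow, Real.sq_sqrt hH1.le, mul_inv_cancel₀ hH1.ne']
  have hq := le_add_inner_add_sq_of_h0h1Smooth (m := m) hH1 hgrad hsmooth y
  have hgrad_le : ‖f' y‖ ≤ M * r := by
    have := mul_norm_le_of_quadratic_bound hq hr.le hL hm
    -- multiply by `H1 * r` and use `H1 * F + L / 2 = H0 / 2 + 3 / 2 * H1 * F ≤ M`
    nlinarith [mul_le_mul_of_nonneg_left this (mul_nonneg hH1.le hr.le)]
  have hstep_le : η * ‖f' y‖ ≤ r := by
    calc η * ‖f' y‖ ≤ θ / M * (M * r) := by gcongr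
      _ = θ * r := by field_simp
      _ ≤ r := by nlinarith
  have hLη : L * η ≤ 1 := by
    calc L * η ≤ 4 / 3 * M * (θ / M) := by gcongr; linarith
      _ = 4 / 3 * θ := by field_simp
      _ ≤ 1 := by linarith
  have := apply_sub_smul_le hq hη hstep_le
  nlinarith [mul_le_mul_of_nonneg_right hLη (mul_nonneg hη (sq_nonneg ‖f' y‖))]

end WarmUp

/-- Basic descent for GD with warm-up step size on an
`(H0,H1)`-smooth function (`H0, H1 > 0`, bounded below): with
`η_k = θ·min{1/H0, 1/(3H1 F_k)} = θ / max{H0, 3H1 F_k}` (the latter form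
incorporates the convention `η_k = θ/H0` when `F_k = 0`) and `θ ∈ (0, 3/4]`,
`F_{k+1} ≤ F_k - (η_k/2)‖∇f(x^k)‖²`; in particular `(F_k)` is non-increasing. -/
theorem gd_warmup_basic_descent
    {d : ℕ}
    (f : EuclideanSpace ℝ (Fin d) → ℝ)
    (f' : EuclideanSpace ℝ (Fin d) → EuclideanSpace ℝ (Fin d))
    (H0 H1 θ : ℝ)
    (x : ℕ → EuclideanSpace ℝ (Fin d))
    (hH0 : 0 < H0) (hH1 : 0 < H1)
    (hθ0 : 0 < θ) (hθ1 : θ ≤ 3 / 4)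
    (hgrad : ∀ y, HasGradientAt f (f' y) y)
    (hbdd : BddBelow (Set.range f))
    (hsmooth : ∀ y z : EuclideanSpace ℝ (Fin d),
      Real.sqrt H1 * ‖z - y‖ ≤ 1 →
      ‖f' z - f' y‖ ≤ (H0 + H1 * (f y - ⨅ w, f w)) * ‖z - y‖)
    -- GD with warm-up step size
    (hupdate : ∀ k, x (k + 1) =
      x k - (θ / max H0 (3 * H1 * (f (x k) - ⨅ w, f w))) • f' (x k)) :
    (∀ k, f (x (k + 1)) - ⨅ w, f w ≤
      (f (x k) - ⨅ w, f w) -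
        (θ / max H0 (3 * H1 * (f (x k) - ⨅ w, f w))) / 2 * ‖f' (x k)‖ ^ 2) ∧
    (∀ k, f (x (k + 1)) - ⨅ w, f w ≤ f (x k) - ⨅ w, f w) := by
  have hdescent : ∀ k, f (x (k + 1)) - ⨅ w, f w ≤
      (f (x k) - ⨅ w, f w) -
        (θ / max H0 (3 * H1 * (f (x k) - ⨅ w, f w))) / 2 * ‖f' (x k)‖ ^ 2 := by
    intro k
    have := apply_sub_warmUpStep_le hH0 hH1 hθ0.le hθ1 hgrad (ciInf_le hbdd) hsmooth (x k)
    rw [hupdate k]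
    linarith
  refine ⟨hdescent, fun k => (hdescent k).trans (sub_le_self _ ?_)⟩
  have : 0 < max H0 (3 * H1 * (f (x k) - ⨅ w, f w)) := lt_max_of_lt_left hH0
  positivity
end

section
/- Let f : ℝ^d → ℝ be (H0,H1)-smooth with H0, H1 > 0, convex, and attain its minimum f* at x*. Run GD with warm-up step size η_k = θ·min{1/H0, 1/(3H1·F_k)}, F_k := f(x^k) − f*, with θ ∈ (0, 3/4]. Then for all k ≥ 0, ‖x^k − x*‖ ≤ ‖x^0 − x*‖. -/
/-!
The distance to `x*` does not increase along a gradient step of length `η` as soon as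
`η ‖∇f(x)‖² ≤ 2 ⟪∇f(x), x - x*⟫`, and by convexity it suffices that `η ‖∇f(x)‖² ≤ 2 F`,
where `F = f(x) - f*`.
On the ball of radius `1/√H1` around `x`, `∇f` is Lipschitz with constant `L = H0 + H1 F`, so the
descent lemma guarantees a decrease `(s - L s² / 2) ‖∇f(x)‖²` along a step `-s ∇f(x)` that stays
in this ball. That decrease is at most `F`; taking `s = 1/L`, or the largest admissible `s`,
gives `‖∇f(x)‖² ≤ (8/3) F max{H0, 3 H1 F}`. With `η = θ / max{H0, 3 H1 F}` and `θ ≤ 3/4`, the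
required inequality follows.
-/

open scoped RealInnerProductSpace
open Set

theorem sq_le_mul_max_of_forall_decrease_le {G F H0 H1 : ℝ} (hH0 : 0 < H0) (hH1 : 0 < H1)
    (hF : 0 ≤ F)
    (h : ∀ s, 0 ≤ s → √H1 * (s * G) ≤ 1 → (s - (H0 + H1 * F) / 2 * s ^ 2) * G ^ 2 ≤ F) :
    G ^ 2 ≤ 8 / 3 * F * max H0 (3 * H1 * F) := by
  set L := H0 + H1 * F
  set M := max H0 (3 * H1 * F)
  have hL : 0 < L := by positivity
  have hLM : L ≤ 4 / 3 * M := by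
    have := le_max_left H0 (3 * H1 * F); have := le_max_right H0 (3 * H1 * F); linarith
  have hr : 0 < √H1 := Real.sqrt_pos.2 hH1
  have hr2 : √H1 ^ 2 = H1 := Real.sq_sqrt hH1.le
  rcases le_or_gt (√H1 * G) L with hsmall | hlarge
  · have := h (1 / L) (by positivity) (by
      rwa [show √H1 * (1 / L * G) = √H1 * G / L by ring, div_le_one hL])
    have hGL : G ^ 2 ≤ F * (2 * L) := by
      have e : (1 / L - L / 2 * (1 / L) ^ 2) * G ^ 2 = G ^ 2 / (2 * L) := by field_simp; ring
      rwa [e, div_le_iff₀ (by positivity)] at this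
    nlinarith
  · have hG : 0 < G := by nlinarith
    have := h (1 / (√H1 * G)) (by positivity) (by field_simp; rfl)
    have hGF : G < 2 * √H1 * F := by
      have e : (1 / (√H1 * G) - L / 2 * (1 / (√H1 * G)) ^ 2) * G ^ 2
          = (2 * √H1 * G - L) / (2 * H1) := by field_simp; rw [hr2]; ring
      rw [e, div_le_iff₀ (by positivity)] at this
      nlinarith
    have hGsq : G ^ 2 ≤ 4 / 3 * F * (3 * H1 * F) := by
      nlinarith [mul_self_lt_mul_self hG.le hGF]
    nlinarith [mul_le_mul_of_nonneg_left (le_max_right H0 (3 * H1 * F)) hF,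
      mul_le_mul_of_nonneg_left (le_max_left H0 (3 * H1 * F)) hF]

section InnerProductSpace

variable {E : Type*} [NormedAddCommGroup E] [InnerProductSpace ℝ E]

theorem norm_sub_smul_sub_le_of_mul_sq_le_inner {x y g : E} {η : ℝ} (hη : 0 ≤ η)
    (h : η * ‖g‖ ^ 2 ≤ 2 * ⟪g, x - y⟫) : ‖x - η • g - y‖ ≤ ‖x - y‖ := by
  have hsq : ‖x - y - η • g‖ ^ 2 ≤ ‖x - y‖ ^ 2 := by
    rw [norm_sub_sq_real, real_inner_smul_right, norm_smul, Real.norm_eq_abs, abs_of_nonneg hη,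
      real_inner_comm]
    nlinarith
  rw [sub_right_comm]
  exact (pow_le_pow_iff_left₀ (norm_nonneg _) (norm_nonneg _) two_ne_zero).1 hsq

variable [CompleteSpace E]

theorem le_add_inner_add_of_norm_gradient_sub_le {f : E → ℝ} {f' : E → E} {L : ℝ} {x y : E}
    (hgrad : ∀ t ∈ Icc (0 : ℝ) 1, HasGradientAt f (f' (x + t • (y - x))) (x + t • (y - x)))
    (hlip : ∀ t ∈ Icc (0 : ℝ) 1, ‖f' (x + t • (y - x)) - f' x‖ ≤ L * (t * ‖y - x‖)) :
    f y ≤ f x + ⟪f' x, y - x⟫ + L / 2 * ‖y - x‖ ^ 2 := by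
  set v := y - x
  have hline : ∀ t ∈ Icc (0 : ℝ) 1,
      HasDerivAt (fun s : ℝ => f (x + s • v) - s * ⟪f' x, v⟫) ⟪f' (x + t • v) - f' x, v⟫ t := by
    intro t ht
    have hcurve : HasDerivAt (fun s : ℝ => x + s • v) v t := by
      simpa using ((hasDerivAt_id t).smul_const v).const_add x
    have := ((hasGradientAt_iff_hasFDerivAt.1 (hgrad t ht)).comp_hasDerivAt t hcurve).sub
      ((hasDerivAt_id t).mul_const ⟪f' x, v⟫)
    exact this.congr_deriv (by simp [inner_sub_left])
  have hbound : ∀ t : ℝ,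
      HasDerivAt (fun s : ℝ => f x + L / 2 * s ^ 2 * ‖v‖ ^ 2) (L * t * ‖v‖ ^ 2) t := fun t =>
    ((((hasDerivAt_pow 2 t).const_mul (L / 2)).mul_const (‖v‖ ^ 2)).const_add
      (f x)).congr_deriv (by ring)
  have key := image_le_of_deriv_right_le_deriv_boundary
    (fun t ht => (hline t ht).continuousAt.continuousWithinAt)
    (fun t ht => (hline t (Ico_subset_Icc_self ht)).hasDerivWithinAt)
    (by simp) (fun t _ => (hbound t).continuousAt.continuousWithinAt)
    (fun t _ => (hbound t).hasDerivWithinAt)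
    (fun t ht => (real_inner_le_norm _ _).trans <| by
      have := hlip t (Ico_subset_Icc_self ht)
      nlinarith [norm_nonneg v]) (right_mem_Icc.2 zero_le_one)
  simp only [one_smul, one_mul, one_pow, v, add_sub_cancel] at key
  linarith

theorem apply_sub_smul_gradient_le {f : E → ℝ} {f' : E → E} {L s : ℝ} {z : E}
    (hgrad : ∀ w, HasGradientAt f (f' w) w)
    (hlip : ∀ w, ‖w - z‖ ≤ ‖s • f' z‖ → ‖f' w - f' z‖ ≤ L * ‖w - z‖) :
    f (z - s • f' z) ≤ f z - (s - L / 2 * s ^ 2) * ‖f' z‖ ^ 2 := by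
  have hdir : z - s • f' z - z = -(s • f' z) := by abel
  have := le_add_inner_add_of_norm_gradient_sub_le (L := L) (x := z) (y := z - s • f' z)
      (fun t _ => hgrad _) fun t ht => by
    have hw : ‖z + t • (z - s • f' z - z) - z‖ = t * ‖z - s • f' z - z‖ := by
      rw [add_sub_cancel_left, norm_smul, Real.norm_eq_abs, abs_of_nonneg ht.1]
    rw [← hw]
    refine hlip _ ?_
    rw [hw, hdir, norm_neg]
    exact mul_le_of_le_one_left (norm_nonneg _) ht.2
  rw [hdir, inner_neg_right, real_inner_smul_right, real_inner_self_eq_norm_sq, norm_neg,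
    norm_smul, mul_pow, Real.norm_eq_abs, sq_abs] at this
  linarith

theorem sq_norm_gradient_le_of_H0H1_smooth {f : E → ℝ} {f' : E → E} {H0 H1 fmin : ℝ}
    (hH0 : 0 < H0) (hH1 : 0 < H1) (hgrad : ∀ y, HasGradientAt f (f' y) y)
    (hsmooth : ∀ y z : E, √H1 * ‖z - y‖ ≤ 1 →
      ‖f' z - f' y‖ ≤ (H0 + H1 * (f y - fmin)) * ‖z - y‖)
    (hmin : ∀ y, fmin ≤ f y) (z : E) :
    ‖f' z‖ ^ 2 ≤ 8 / 3 * (f z - fmin) * max H0 (3 * H1 * (f z - fmin)) := by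
  refine sq_le_mul_max_of_forall_decrease_le hH0 hH1 (sub_nonneg.2 (hmin z)) fun s hs hstep => ?_
  have := apply_sub_smul_gradient_le hgrad fun w hw => hsmooth z w <| by
    rw [norm_smul, Real.norm_eq_abs, abs_of_nonneg hs] at hw
    exact (mul_le_mul_of_nonneg_left hw (Real.sqrt_nonneg H1)).trans hstep
  linarith [hmin (z - s • f' z)]

end InnerProductSpace

/-- The step size `θ / max H0 (3 * H1 * F_k)` is the paper's `θ·min{1/H0, 1/(3H1·F_k)}`,
including the convention `η_k = θ / H0` when `F_k = 0`. -/
theorem gd_warmup_distance_monotone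
    {d : ℕ}
    (f : EuclideanSpace ℝ (Fin d) → ℝ)
    (f' : EuclideanSpace ℝ (Fin d) → EuclideanSpace ℝ (Fin d))
    (H0 H1 θ : ℝ)
    (xstar : EuclideanSpace ℝ (Fin d))
    (x : ℕ → EuclideanSpace ℝ (Fin d))
    (hH0 : 0 < H0) (hH1 : 0 < H1)
    (hθ0 : 0 < θ) (hθ1 : θ ≤ 3 / 4)
    (hgrad : ∀ y, HasGradientAt f (f' y) y)
    (hsmooth : ∀ y z : EuclideanSpace ℝ (Fin d),
      Real.sqrt H1 * ‖z - y‖ ≤ 1 →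
      ‖f' z - f' y‖ ≤ (H0 + H1 * (f y - f xstar)) * ‖z - y‖)
    -- convexity
    (hconvex : ∀ y z : EuclideanSpace ℝ (Fin d), f y - f z ≤ ⟪f' y, y - z⟫)
    -- `f` attains its minimum `f*` at `xstar`
    (hmin : ∀ y, f xstar ≤ f y)
    -- GD with warm-up step size
    (hupdate : ∀ k, x (k + 1) =
      x k - (θ / max H0 (3 * H1 * (f (x k) - f xstar))) • f' (x k)) :
    ∀ k, ‖x k - xstar‖ ≤ ‖x 0 - xstar‖ := by
  have hstep : ∀ n, ‖x (n + 1) - xstar‖ ≤ ‖x n - xstar‖ := by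
    intro n
    set F := f (x n) - f xstar
    set M := max H0 (3 * H1 * F)
    have hM : 0 < M := hH0.trans_le (le_max_left _ _)
    have hF : 0 ≤ F := sub_nonneg.2 (hmin (x n))
    rw [hupdate n]
    refine norm_sub_smul_sub_le_of_mul_sq_le_inner (by positivity) ?_
    calc θ / M * ‖f' (x n)‖ ^ 2 ≤ θ / M * (8 / 3 * F * M) := by
          gcongr
          exact sq_norm_gradient_le_of_H0H1_smooth hH0 hH1 hgrad hsmooth hmin (x n)
      _ = 8 / 3 * θ * F := by field_simp
      _ ≤ 2 * F := by nlinarith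
      _ ≤ 2 * ⟪f' (x n), x n - xstar⟫ := by linarith [hconvex (x n) xstar]
  exact fun k => antitone_nat_of_succ_le (f := fun n => ‖x n - xstar‖) hstep (Nat.zero_le k)
end

section
/- Let f : ℝ^d → ℝ be (H0,H1)-smooth with H0, H1 > 0 and μ-strongly convex with minimizer x* and minimum value f*. Run GD with warm-up step size η_k = θ·min{1/H0, 1/(3H1·F_k)}, F_k := f(x^k) − f*, with θ = 1/(4√2 + 4). If N ≥ 8·H0/(θ·μ) + 12·log(2)·H1·F_0/(θ·μ), then f(x^N) − f* ≤ F_0/2; consequently, GD reaches accuracy f(x^N) − f* ≤ ε within O( (H0/(θμ))·log(F_0/ε) + H1·F_0/(θμ) ) iterations. -/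
/-!
Everything rests on one step. On the ball of radius `1/√H1` around `y`, `(H0,H1)`-smoothness
gives the descent inequality with constant `L = H0 + H1 F(y)`; a gradient step of exactly that
length cannot go below `f*`, which yields `‖∇f(y)‖√H1 ≤ (H0 + 3H1 F(y))/2 ≤ max{H0, 3H1 F(y)}`.
So the warm-up step stays inside the ball, `Lη ≤ 1`, and with the Polyak–Łojasiewicz inequality
`2μF ≤ ‖∇f‖²` (from strong convexity) we get `F_{k+1} ≤ (1 - θμ / max{H0, 3H1 F_k}) F_k`.

Hence `F_k` decreases and the factor is at most `1 - θμ / max{H0, 3H1 F_0}`, which gives the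
halving bound. For accuracy `ε`: while `F_k > H0/(3H1)` the recursion reads
`F_{k+1} ≤ F_k - θμ/(3H1)`, so after `⌈3H1 F_0/(θμ)⌉` steps `F_k ≤ H0/(3H1)`, and from then on
`F` contracts by `1 - θμ/H0` per step.
-/

open scoped RealInnerProductSpace

noncomputable section

section Smooth

variable {E : Type*} [NormedAddCommGroup E] [InnerProductSpace ℝ E] {f : E → ℝ} {f' : E → E}

theorem two_mul_sub_le_norm_sq_of_stronglyConvex {μ : ℝ} (hμ : 0 < μ)
    (hsc : ∀ y z : E, f y - f z + μ / 2 * ‖y - z‖ ^ 2 ≤ ⟪f' y, y - z⟫) (y z : E) :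
    2 * μ * (f y - f z) ≤ ‖f' y‖ ^ 2 := by
  have hcs := real_inner_le_norm (f' y) (y - z)
  nlinarith [hsc y z, sq_nonneg (‖f' y‖ - μ * ‖y - z‖)]

variable [CompleteSpace E]

theorem hasDerivAt_comp_add_smul (hgrad : ∀ y, HasGradientAt f (f' y) y) (y v : E) (t : ℝ) :
    HasDerivAt (fun t : ℝ => f (y + t • v)) ⟪f' (y + t • v), v⟫ t := by
  have hline : HasDerivAt (fun t : ℝ => y + t • v) v t := by
    simpa using ((hasDerivAt_id t).smul_const v).const_add y
  simpa [Function.comp_def] using (hgrad (y + t • v)).hasFDerivAt.comp_hasDerivAt t hline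

theorem le_add_inner_add_of_norm_sub_le (hgrad : ∀ y, HasGradientAt f (f' y) y) {y v : E} {L : ℝ}
    (hlip : ∀ t ∈ Set.Icc (0 : ℝ) 1, ‖f' (y + t • v) - f' y‖ ≤ L * (t * ‖v‖)) :
    f (y + v) ≤ f y + ⟪f' y, v⟫ + L / 2 * ‖v‖ ^ 2 := by
  have hB : ∀ t : ℝ, HasDerivAt (fun t => f y + t * ⟪f' y, v⟫ + L / 2 * t ^ 2 * ‖v‖ ^ 2)
      (⟪f' y, v⟫ + L * t * ‖v‖ ^ 2) t := fun t => by
    refine ((((hasDerivAt_id' t).mul_const ⟪f' y, v⟫).const_add (f y)).fun_add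
      (((hasDerivAt_pow 2 t).const_mul (L / 2)).mul_const (‖v‖ ^ 2))).congr_deriv ?_
    simp only [one_mul, Nat.cast_ofNat, Nat.add_one_sub_one, pow_one]
    ring
  have hbound : ∀ t ∈ Set.Ico (0 : ℝ) 1, ⟪f' (y + t • v), v⟫ ≤ ⟪f' y, v⟫ + L * t * ‖v‖ ^ 2 := by
    intro t ht
    have hcs := real_inner_le_norm (f' (y + t • v) - f' y) v
    rw [inner_sub_left] at hcs
    nlinarith [mul_le_mul_of_nonneg_right (hlip t (Set.Ico_subset_Icc_self ht)) (norm_nonneg v)]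
  have key := image_le_of_deriv_right_le_deriv_boundary
    (fun t _ => (hasDerivAt_comp_add_smul hgrad y v t).continuousAt.continuousWithinAt)
    (fun t _ => (hasDerivAt_comp_add_smul hgrad y v t).hasDerivWithinAt)
    (by simp) (fun t _ => (hB t).continuousAt.continuousWithinAt)
    (fun t _ => (hB t).hasDerivWithinAt) hbound (Set.right_mem_Icc.2 zero_le_one)
  simpa using key

def IsH0H1Smooth (f : E → ℝ) (f' : E → E) (H0 H1 fstar : ℝ) : Prop :=
  ∀ y z : E, Real.sqrt H1 * ‖z - y‖ ≤ 1 → ‖f' z - f' y‖ ≤ (H0 + H1 * (f y - fstar)) * ‖z - y‖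

variable {H0 H1 fstar : ℝ}

theorem IsH0H1Smooth.le_add_inner_add (hf : IsH0H1Smooth f f' H0 H1 fstar)
    (hgrad : ∀ y, HasGradientAt f (f' y) y) {y v : E} (hv : Real.sqrt H1 * ‖v‖ ≤ 1) :
    f (y + v) ≤ f y + ⟪f' y, v⟫ + (H0 + H1 * (f y - fstar)) / 2 * ‖v‖ ^ 2 := by
  refine le_add_inner_add_of_norm_sub_le hgrad fun t ht => ?_
  have hnorm : ‖y + t • v - y‖ = t * ‖v‖ := by
    rw [add_sub_cancel_left, norm_smul, Real.norm_of_nonneg ht.1]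
  rw [← hnorm]
  refine hf y _ ?_
  rw [hnorm]
  nlinarith [mul_nonneg (Real.sqrt_nonneg H1) (norm_nonneg v), ht.2]

theorem IsH0H1Smooth.norm_mul_sqrt_le (hf : IsH0H1Smooth f f' H0 H1 fstar)
    (hgrad : ∀ y, HasGradientAt f (f' y) y) (hH0 : 0 ≤ H0) (hH1 : 0 < H1)
    (hlow : ∀ z, fstar ≤ f z) (y : E) :
    ‖f' y‖ * Real.sqrt H1 ≤ (H0 + 3 * H1 * (f y - fstar)) / 2 := by
  rcases (norm_nonneg (f' y)).eq_or_lt with hG | hG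
  · rw [← hG, zero_mul]
    nlinarith [hlow y]
  set s := Real.sqrt H1
  have hs : 0 < s := Real.sqrt_pos.2 hH1
  have hss : s * s = H1 := Real.mul_self_sqrt hH1.le
  set v := -(s * ‖f' y‖)⁻¹ • f' y
  have hv : ‖v‖ = s⁻¹ := by
    rw [norm_smul, norm_neg, norm_inv, Real.norm_of_nonneg (by positivity)]
    field_simp
  have hinner : ⟪f' y, v⟫ = -(‖f' y‖ / s) := by
    rw [real_inner_smul_right, real_inner_self_eq_norm_sq]
    field_simp
  have hstep := hf.le_add_inner_add hgrad (y := y) (v := v) (by rw [hv, mul_inv_cancel₀ hs.ne'])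
  rw [hinner, hv, inv_pow, sq, hss] at hstep
  have hdiv : ‖f' y‖ / s ≤ f y - fstar + (H0 + H1 * (f y - fstar)) / 2 * H1⁻¹ := by
    linarith [hlow (y + v)]
  calc ‖f' y‖ * s = ‖f' y‖ / s * H1 := by rw [← hss]; field_simp
    _ ≤ (f y - fstar + (H0 + H1 * (f y - fstar)) / 2 * H1⁻¹) * H1 := by gcongr
    _ = (H0 + 3 * H1 * (f y - fstar)) / 2 := by field_simp; ring

theorem IsH0H1Smooth.warmup_step_sub_le (hf : IsH0H1Smooth f f' H0 H1 fstar)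
    (hgrad : ∀ y, HasGradientAt f (f' y) y) (hH0 : 0 < H0) (hH1 : 0 < H1)
    (hlow : ∀ z, fstar ≤ f z) {μ θ : ℝ} (hθ : 0 ≤ θ) (hθ' : θ ≤ 3 / 4)
    (hPL : ∀ z, 2 * μ * (f z - fstar) ≤ ‖f' z‖ ^ 2) (y : E) :
    f (y - (θ / max H0 (3 * H1 * (f y - fstar))) • f' y) - fstar ≤
      (1 - θ * μ / max H0 (3 * H1 * (f y - fstar))) * (f y - fstar) := by
  set M := max H0 (3 * H1 * (f y - fstar))
  have hM : 0 < M := lt_max_of_lt_left hH0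
  set η := θ / M
  have hη : 0 ≤ η := by positivity
  have hηM : η * M = θ := div_mul_cancel₀ θ hM.ne'
  have hy := hlow y
  have hgradM : ‖f' y‖ * Real.sqrt H1 ≤ M :=
    (hf.norm_mul_sqrt_le hgrad hH0.le hH1 hlow y).trans (by
      linarith [le_max_left H0 (3 * H1 * (f y - fstar)), le_max_right H0 (3 * H1 * (f y - fstar))])
  have hv : ‖-η • f' y‖ = η * ‖f' y‖ := by rw [norm_smul, norm_neg, Real.norm_of_nonneg hη]
  have hstep := hf.le_add_inner_add hgrad (y := y) (v := -η • f' y) (by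
    rw [hv]
    nlinarith [mul_le_mul_of_nonneg_left hgradM hη])
  rw [hv, real_inner_smul_right, real_inner_self_eq_norm_sq, neg_smul, ← sub_eq_add_neg] at hstep
  -- the local smoothness constant is at most `4M/3`, so `L η ≤ 4θ/3 ≤ 1`
  have hLη : (H0 + H1 * (f y - fstar)) * η ≤ 1 := by
    nlinarith [le_max_left H0 (3 * H1 * (f y - fstar)), le_max_right H0 (3 * H1 * (f y - fstar))]
  have hdecrease : f (y - η • f' y) ≤ f y - η / 2 * ‖f' y‖ ^ 2 := by
    nlinarith [mul_le_mul_of_nonneg_right hLη (mul_nonneg hη (sq_nonneg ‖f' y‖))]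
  have hθμ : θ * μ / M = η * μ := by ring
  rw [hθμ]
  nlinarith [mul_le_mul_of_nonneg_left (hPL y) hη]

end Smooth

section Recurrence

variable {F : ℕ → ℝ}

theorem le_exp_neg_mul_of_le_one_sub_mul {q : ℝ} (hF : ∀ k, 0 ≤ F k)
    (h : ∀ k, F (k + 1) ≤ (1 - q) * F k) (n : ℕ) : F n ≤ Real.exp (-(q * n)) * F 0 := by
  induction n with
  | zero => simp
  | succ n ih =>
    calc F (n + 1) ≤ Real.exp (-q) * F n :=
          (h n).trans (mul_le_mul_of_nonneg_right (by linarith [Real.add_one_le_exp (-q)]) (hF n))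
      _ ≤ Real.exp (-q) * (Real.exp (-(q * n)) * F 0) := by gcongr
      _ = Real.exp (-(q * ↑(n + 1))) * F 0 := by
        rw [← mul_assoc, ← Real.exp_add]; push_cast; ring_nf

theorem le_max_sub_of_le_sub {T a : ℝ} (hmono : Antitone F)
    (h : ∀ k, T < F k → F (k + 1) ≤ F k - a) (n : ℕ) : F n ≤ max (F 0 - n * a) T := by
  induction n with
  | zero => simp
  | succ n ih =>
    rcases le_or_gt (F n) T with hT | hT
    · exact le_max_of_le_right ((hmono n.le_succ).trans hT)
    · have hlin : F n ≤ F 0 - n * a := (le_max_iff.1 ih).resolve_right hT.not_ge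
      refine le_max_of_le_left ?_
      push_cast
      linarith [h n hT]

variable {H0 H1 A : ℝ}

theorem antitone_of_warmup (hH1 : 0 ≤ H1) (hA : 0 ≤ A) (hF : ∀ k, 0 ≤ F k)
    (hrec : ∀ k, F (k + 1) ≤ (1 - A / max H0 (3 * H1 * F k)) * F k) : Antitone F := by
  refine antitone_nat_of_succ_le fun k => (hrec k).trans ?_
  have hM : 0 ≤ max H0 (3 * H1 * F k) := le_max_of_le_right (by have := hF k; positivity)
  nlinarith [mul_nonneg (div_nonneg hA hM) (hF k)]

theorem warmup_halving (hH0 : 0 < H0) (hH1 : 0 ≤ H1) (hA : 0 < A) (hF : ∀ k, 0 ≤ F k)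
    (hrec : ∀ k, F (k + 1) ≤ (1 - A / max H0 (3 * H1 * F k)) * F k) (N : ℕ)
    (hN : 8 * H0 / A + 12 * Real.log 2 * H1 * F 0 / A ≤ N) : F N ≤ F 0 / 2 := by
  have hanti := antitone_of_warmup hH1 hA.le hF hrec
  set M₀ := max H0 (3 * H1 * F 0)
  have hM₀ : 0 < M₀ := lt_max_of_lt_left hH0
  have hcontract : ∀ k, F (k + 1) ≤ (1 - A / M₀) * F k := fun k => by
    refine (hrec k).trans (mul_le_mul_of_nonneg_right (sub_le_sub_left ?_ 1) (hF k))
    refine div_le_div_of_nonneg_left hA.le (lt_max_of_lt_left hH0) (max_le_max le_rfl ?_)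
    exact mul_le_mul_of_nonneg_left (hanti k.zero_le) (by positivity)
  have hlog : Real.log 2 ≤ A / M₀ * N := by
    rw [← add_div, div_le_iff₀ hA] at hN
    rw [div_mul_eq_mul_div, le_div_iff₀ hM₀]
    have hM₀le : M₀ ≤ H0 + 3 * H1 * F 0 := max_le (by linarith [hF 0, mul_nonneg hH1 (hF 0)])
      (by linarith)
    nlinarith [Real.log_two_lt_d9, Real.log_pos one_lt_two, mul_nonneg hH1 (hF 0)]
  calc F N ≤ Real.exp (-(A / M₀ * N)) * F 0 := le_exp_neg_mul_of_le_one_sub_mul hF hcontract N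
    _ ≤ Real.exp (-Real.log 2) * F 0 := by gcongr; exact hF 0
    _ = F 0 / 2 := by rw [Real.exp_neg, Real.exp_log two_pos]; ring

theorem warmup_le_threshold (hH0 : 0 < H0) (hH1 : 0 < H1) (hA : 0 < A) (hF : ∀ k, 0 ≤ F k)
    (hrec : ∀ k, F (k + 1) ≤ (1 - A / max H0 (3 * H1 * F k)) * F k) {K : ℕ}
    (hK : 3 * H1 * F 0 / A ≤ K) : F K ≤ H0 / (3 * H1) := by
  have hT : 0 < H0 / (3 * H1) := by positivity
  have hlinear : ∀ k, H0 / (3 * H1) < F k → F (k + 1) ≤ F k - A / (3 * H1) := by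
    intro k hk
    have hFk : 0 < F k := hT.trans hk
    rw [div_lt_iff₀ (by positivity), mul_comm] at hk
    have := hrec k
    rw [max_eq_right hk.le] at this
    convert this using 1
    field_simp
  refine (le_max_sub_of_le_sub (antitone_of_warmup hH1.le hA.le hF hrec) hlinear K).trans
    (max_le ?_ le_rfl)
  rw [div_le_iff₀ hA] at hK
  have : F 0 ≤ K * (A / (3 * H1)) := by
    rw [mul_div_assoc', le_div_iff₀ (by positivity)]; linarith
  linarith

theorem warmup_le_exp_of_le_threshold (hH1 : 0 < H1) (hA : 0 ≤ A) (hF : ∀ k, 0 ≤ F k)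
    (hrec : ∀ k, F (k + 1) ≤ (1 - A / max H0 (3 * H1 * F k)) * F k) {K : ℕ}
    (hK : F K ≤ H0 / (3 * H1)) (m : ℕ) :
    F (K + m) ≤ Real.exp (-(A / H0 * m)) * F K := by
  have hanti := antitone_of_warmup hH1.le hA hF hrec
  have hcontract : ∀ j, F (K + j + 1) ≤ (1 - A / H0) * F (K + j) := fun j => by
    have hbelow : 3 * H1 * F (K + j) ≤ H0 := by
      have := (hanti (K.le_add_right j)).trans hK
      rwa [le_div_iff₀ (by positivity), mul_comm] at this
    simpa only [max_eq_left hbelow] using hrec (K + j)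
  simpa using le_exp_neg_mul_of_le_one_sub_mul (F := fun j => F (K + j)) (fun j => hF _)
    hcontract m

theorem warmup_le_of_iterations_ge (hH0 : 0 < H0) (hH1 : 0 < H1) (hA : 0 < A) (hF : ∀ k, 0 ≤ F k)
    (hrec : ∀ k, F (k + 1) ≤ (1 - A / max H0 (3 * H1 * F k)) * F k) {ε : ℝ} (hε : 0 < ε)
    (hεF : ε < F 0) {N : ℕ} (hN : H0 / A * Real.log (F 0 / ε) + 3 * H1 * F 0 / A + 1 ≤ N) :
    F N ≤ ε := by
  have hlog : 0 ≤ Real.log (F 0 / ε) := Real.log_nonneg ((one_le_div hε).2 hεF.le)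
  set K := ⌈3 * H1 * F 0 / A⌉₊
  have hK : (K : ℝ) < 3 * H1 * F 0 / A + 1 := Nat.ceil_lt_add_one (by have := hF 0; positivity)
  have hKN : (K : ℝ) ≤ N := by nlinarith [mul_nonneg (div_pos hH0 hA).le hlog]
  obtain ⟨m, rfl⟩ := Nat.exists_eq_add_of_le (show K ≤ N by exact_mod_cast hKN)
  have hm : Real.log (F 0 / ε) ≤ A / H0 * m := by
    have : H0 / A * Real.log (F 0 / ε) ≤ m := by push_cast at hN; linarith
    calc Real.log (F 0 / ε) = A / H0 * (H0 / A * Real.log (F 0 / ε)) := by field_simp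
      _ ≤ A / H0 * m := by gcongr
  have hF0 : 0 < F 0 := hε.trans hεF
  calc F (K + m) ≤ Real.exp (-(A / H0 * m)) * F K := warmup_le_exp_of_le_threshold hH1 hA.le hF hrec
        (warmup_le_threshold hH0 hH1 hA hF hrec (Nat.le_ceil _)) m
    _ ≤ Real.exp (-Real.log (F 0 / ε)) * F 0 := mul_le_mul (Real.exp_le_exp.2 (by linarith))
        (antitone_of_warmup hH1.le hA.le hF hrec K.zero_le) (hF K) (Real.exp_nonneg _)
    _ = ε := by
      rw [Real.exp_neg, Real.exp_log (div_pos hF0 hε), inv_div, div_mul_cancel₀ _ hF0.ne']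

theorem warmup_iteration_complexity (hH0 : 0 < H0) (hH1 : 0 < H1) (hA : 0 < A)
    (hF : ∀ k, 0 ≤ F k) (hrec : ∀ k, F (k + 1) ≤ (1 - A / max H0 (3 * H1 * F k)) * F k) :
    ∃ C : ℝ, 0 < C ∧ ∀ ε : ℝ, 0 < ε → ∀ N : ℕ,
      C * (H0 / A * Real.log (F 0 / ε) + H1 * F 0 / A) ≤ N → F N ≤ ε := by
  have hanti := antitone_of_warmup hH1.le hA.le hF hrec
  rcases (hF 0).eq_or_lt with hF0 | hF0
  · exact ⟨1, one_pos, fun ε hε N _ => (hanti N.zero_le).trans (hF0 ▸ hε.le)⟩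
  -- the constant absorbs the `+ 1` coming from the ceiling in the first phase
  refine ⟨3 + A / (H1 * F 0), by positivity, fun ε hε N hN => ?_⟩
  rcases le_or_gt (F 0) ε with hεF | hεF
  · exact (hanti N.zero_le).trans hεF
  refine warmup_le_of_iterations_ge hH0 hH1 hA hF hrec hε hεF (hN.trans' ?_)
  have hlog : 0 ≤ H0 / A * Real.log (F 0 / ε) :=
    mul_nonneg (div_pos hH0 hA).le (Real.log_nonneg ((one_le_div hε).2 hεF.le))
  have hone : A / (H1 * F 0) * (H1 * F 0 / A) = 1 := by field_simp
  have hthree : 3 * H1 * F 0 / A = 3 * (H1 * F 0 / A) := by ring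
  nlinarith [mul_nonneg (div_pos hA (mul_pos hH1 hF0)).le hlog]

end Recurrence

/-- Strongly convex rate for GD with warm-up step size on an
`(H0,H1)`-smooth (`H0, H1 > 0`) and `μ`-strongly convex function with minimizer
`x*` and minimum `f*`, with `θ = 1/(4√2 + 4)` and
`η_k = θ / max{H0, 3H1 F_k}` (encoding `θ·min{1/H0, 1/(3H1 F_k)}` with the
convention `η_k = θ/H0` for `F_k = 0`). If
`N ≥ 8H0/(θμ) + 12 log(2) H1 F₀/(θμ)`, then `f(x^N) - f* ≤ F₀/2`; consequently
there is a constant `C > 0` such that accuracy `f(x^N) - f* ≤ ε` is reached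
within `C((H0/(θμ)) log(F₀/ε) + H1 F₀/(θμ))` iterations. -/
theorem gd_warmup_strongly_convex_rate
    {d : ℕ}
    (f : EuclideanSpace ℝ (Fin d) → ℝ)
    (f' : EuclideanSpace ℝ (Fin d) → EuclideanSpace ℝ (Fin d))
    (H0 H1 θ μ : ℝ)
    (xstar : EuclideanSpace ℝ (Fin d))
    (x : ℕ → EuclideanSpace ℝ (Fin d))
    (hH0 : 0 < H0) (hH1 : 0 < H1) (hμ : 0 < μ)
    (hθ : θ = 1 / (4 * Real.sqrt 2 + 4))
    (hgrad : ∀ y, HasGradientAt f (f' y) y)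
    (hsmooth : ∀ y z : EuclideanSpace ℝ (Fin d),
      Real.sqrt H1 * ‖z - y‖ ≤ 1 →
      ‖f' z - f' y‖ ≤ (H0 + H1 * (f y - f xstar)) * ‖z - y‖)
    -- `μ`-strong convexity
    (hsc : ∀ y z : EuclideanSpace ℝ (Fin d),
      f y - f z + μ / 2 * ‖y - z‖ ^ 2 ≤ ⟪f' y, y - z⟫)
    -- `f` attains its minimum `f*` at `xstar`
    (hmin : ∀ y, f xstar ≤ f y)
    -- GD with warm-up step size
    (hupdate : ∀ k, x (k + 1) =
      x k - (θ / max H0 (3 * H1 * (f (x k) - f xstar))) • f' (x k)) :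
    -- halving within the stated number of iterations
    (∀ N : ℕ,
      8 * H0 / (θ * μ) + 12 * Real.log 2 * H1 * (f (x 0) - f xstar) / (θ * μ) ≤ N →
      f (x N) - f xstar ≤ (f (x 0) - f xstar) / 2) ∧
    -- consequent iteration complexity to reach accuracy `ε`
    (∃ C : ℝ, 0 < C ∧ ∀ ε : ℝ, 0 < ε → ∀ N : ℕ,
      C * (H0 / (θ * μ) * Real.log ((f (x 0) - f xstar) / ε) +
        H1 * (f (x 0) - f xstar) / (θ * μ)) ≤ N →
      f (x N) - f xstar ≤ ε) := by
  have hθ₀ : 0 < θ := by rw [hθ]; positivity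
  have hθ₁ : θ ≤ 3 / 4 := by
    rw [hθ, div_le_iff₀ (by positivity)]
    linarith [Real.sqrt_nonneg 2]
  have hPL : ∀ y, 2 * μ * (f y - f xstar) ≤ ‖f' y‖ ^ 2 :=
    fun y => two_mul_sub_le_norm_sq_of_stronglyConvex hμ hsc y xstar
  have hrec : ∀ k, f (x (k + 1)) - f xstar ≤
      (1 - θ * μ / max H0 (3 * H1 * (f (x k) - f xstar))) * (f (x k) - f xstar) := fun k => by
    rw [hupdate k]
    exact IsH0H1Smooth.warmup_step_sub_le hsmooth hgrad hH0 hH1 hmin hθ₀.le hθ₁ hPL (x k)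
  have hF : ∀ k, 0 ≤ f (x k) - f xstar := fun k => sub_nonneg.2 (hmin (x k))
  exact ⟨warmup_halving hH0 hH1.le (mul_pos hθ₀ hμ) hF hrec,
    warmup_iteration_complexity hH0 hH1 (mul_pos hθ₀ hμ) hF hrec⟩

end
end
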